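/- arXiv:1104.0122 — 4 statements merged into one kernel-verified Lean document; each statement's English description precedes it below -/
import Mathlib

section
/- There exists a constant r₀ such that for every configuration P with P ≠ {(0,0)}: if ρ = s/α ≥ r₀, then s ≤ (1/4)·2^(−ρ). -/
open MeasureTheory Set
open scoped Classical

noncomputable section

/-- The cake: the unit square `[0,1]²`. -/
def unitSq : Set (ℝ × ℝ) := Set.Icc ((0, 0) : ℝ × ℝ) ((1, 1) : ℝ × ℝ)

/-- A configuration: a finite point set in the unit square containing the origin. -/
def IsConfig (P : Finset (ℝ × ℝ)) : Prop := ((0, 0) : ℝ × ℝ) ∈ P ∧ ↑P ⊆ unitSq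

/-- Area of the closed axis-parallel rectangle with lower left corner `a` and
upper right corner `b`. -/
def rectArea (a b : ℝ × ℝ) : ℝ := (volume (Set.Icc a b)).toReal

/-- A Bob family for `P`, encoded by assigning to each point `p ∈ P` the upper
right corner `q p` of the closed axis-parallel rectangle placed with lower left
corner `p` (a degenerate rectangle `q p = p` encodes an unused point); the
rectangles lie in the unit square and have pairwise disjoint interiors, and
distinct rectangles automatically have distinct lower left corners. -/
def IsBobFamily (P : Finset (ℝ × ℝ)) (q : ℝ × ℝ → ℝ × ℝ) : Prop :=
  (∀ p ∈ P, p ≤ q p) ∧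
  (∀ p ∈ P, Set.Icc p (q p) ⊆ unitSq) ∧
  (∀ p ∈ P, ∀ p' ∈ P, p ≠ p' →
    interior (Set.Icc p (q p)) ∩ interior (Set.Icc p' (q p')) = ∅)

/-- The total area of a Bob family. -/
def famArea (P : Finset (ℝ × ℝ)) (q : ℝ × ℝ → ℝ × ℝ) : ℝ :=
  ∑ p ∈ P, rectArea p (q p)

/-- `bob(P)`: the supremum of the total area over all Bob families for `P`. -/
def bobP (P : Finset (ℝ × ℝ)) : ℝ :=
  sSup { a : ℝ | ∃ q : ℝ × ℝ → ℝ × ℝ, IsBobFamily P q ∧ a = famArea P q }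

/-- `bob(n)`: the infimum of `bob(P)` over all configurations with `n` points. -/
def bobN (n : ℕ) : ℝ :=
  sInf { a : ℝ | ∃ P : Finset (ℝ × ℝ), IsConfig P ∧ P.card = n ∧ a = bobP P }

/-- `n(r)`: the least `n ≥ 1` with `bob(n) ≤ 1/r`, or `∞` if there is none. -/
def nOf (r : ℝ) : ℕ∞ :=
  sInf { N : ℕ∞ | ∃ n : ℕ, N = (n : ℕ∞) ∧ 1 ≤ n ∧ bobN n ≤ 1 / r }

/-- `stairs(P)`: the union of all closed axis-parallel rectangles in the unit
square with lower left corner `(0,0)` whose interior contains no point of `P`. -/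
def stairs (P : Finset (ℝ × ℝ)) : Set (ℝ × ℝ) :=
  ⋃ b ∈ { b : ℝ × ℝ | b ∈ unitSq ∧ ∀ p ∈ P, p ∉ interior (Set.Icc ((0, 0) : ℝ × ℝ) b) },
    Set.Icc ((0, 0) : ℝ × ℝ) b

/-- `s`: the area of `stairs(P)`. -/
def stairsArea (P : Finset (ℝ × ℝ)) : ℝ := (volume (stairs P)).toReal

/-- `α`: the supremum of areas of axis-parallel rectangles contained in `stairs(P)`. -/
def alphaOf (P : Finset (ℝ × ℝ)) : ℝ :=
  sSup { a : ℝ | ∃ c d : ℝ × ℝ, c ≤ d ∧ Set.Icc c d ⊆ stairs P ∧ a = rectArea c d }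

/-- `ρ := s/α`. -/
def rhoOf (P : Finset (ℝ × ℝ)) : ℝ := stairsArea P / alphaOf P

/-- `a` is a minimum of `S`: no other point of `S` is (weakly) dominated-below it. -/
def IsMinOf (S : Set (ℝ × ℝ)) (a : ℝ × ℝ) : Prop :=
  a ∈ S ∧ ∀ b ∈ S, b ≠ a → ¬(b.1 ≤ a.1 ∧ b.2 ≤ a.2)

/-- `p 0, …, p (k-1)` enumerates the minima of `P \ {(0,0)}` in order of
strictly decreasing `y`-coordinate. -/
def EnumMinima (P : Finset (ℝ × ℝ)) (k : ℕ) (p : Fin k → ℝ × ℝ) : Prop :=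
  (∀ i : Fin k, IsMinOf ((↑P : Set (ℝ × ℝ)) \ {((0, 0) : ℝ × ℝ)}) (p i)) ∧
  (∀ q : ℝ × ℝ, IsMinOf ((↑P : Set (ℝ × ℝ)) \ {((0, 0) : ℝ × ℝ)}) q → ∃ i : Fin k, p i = q) ∧
  (∀ i j : Fin k, i < j → (p j).2 < (p i).2)

/-- The sequence `y₀ = 1`, `yᵢ = y(pᵢ)` (with the paper's `pᵢ` being `p (i-1)` here). -/
def YSeq (k : ℕ) (p : Fin k → ℝ × ℝ) (y : ℕ → ℝ) : Prop :=
  y 0 = 1 ∧ ∀ i : Fin k, y (i.1 + 1) = (p i).2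

/-- The rectangle `Bᵢ = [x(pᵢ), 1] × [yᵢ, y_{i-1}]` (0-indexed here). -/
def rectB (k : ℕ) (p : Fin k → ℝ × ℝ) (y : ℕ → ℝ) (i : Fin k) : Set (ℝ × ℝ) :=
  Set.Icc (((p i).1, y (i.1 + 1)) : ℝ × ℝ) ((1, y i.1) : ℝ × ℝ)

/-- `βᵢ`: the area of `Bᵢ`. -/
def betaOf (k : ℕ) (p : Fin k → ℝ × ℝ) (y : ℕ → ℝ) (i : Fin k) : ℝ :=
  (volume (rectB k p y i)).toReal

/-- The affine map sending the rectangle with corners `a ≤ b` onto `[0,1]²`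
(with `a ↦ (0,0)`). -/
def rectMap (a b : ℝ × ℝ) (q : ℝ × ℝ) : ℝ × ℝ :=
  ((q.1 - a.1) / (b.1 - a.1), (q.2 - a.2) / (b.2 - a.2))

/-- `Pᵢ`: the image of `P ∩ Bᵢ` under the affine map sending `Bᵢ` onto `[0,1]²`. -/
def subConfig (P : Finset (ℝ × ℝ)) (k : ℕ) (p : Fin k → ℝ × ℝ) (y : ℕ → ℝ)
    (i : Fin k) : Finset (ℝ × ℝ) :=
  (P.filter (fun q => q ∈ rectB k p y i)).image
    (rectMap (((p i).1, y (i.1 + 1)) : ℝ × ℝ) ((1, y i.1) : ℝ × ℝ))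


open Filter Topology

/-!
A point `(x, y)` of `stairs P` lies in a rectangle `[0, b]` contained in `stairs P`, so
`x y ≤ α`. Covering the region `{x y ≤ α}` of the unit square by the strip `x ≤ (2/3)ⁿ` and the
`n` strips `(2/3)^(j+1) ≤ x ≤ (2/3)^j`, each of area at most `α / 2`, gives
`s ≤ n α / 2 + (2/3)ⁿ`. Taking `n = ⌊2ρ - 2⌋` and `s = ρ α` yields `α ≤ (2/3)^(2ρ - 3)`, hence
`s ≤ ρ (2/3)^(2ρ - 3) = 2^(-ρ) / 4 · (27/2) ρ (8/9)^ρ`, and `ρ (8/9)^ρ → 0`.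
-/

lemma volume_real_Icc_prod {a b : ℝ × ℝ} (h : a ≤ b) :
    volume.real (Icc a b) = (b.1 - a.1) * (b.2 - a.2) := by
  rw [measureReal_def, Measure.volume_eq_prod, Icc_prod_eq, Measure.prod_prod, Real.volume_Icc,
    Real.volume_Icc, ENNReal.toReal_mul, ENNReal.toReal_ofReal (sub_nonneg.2 h.1),
    ENNReal.toReal_ofReal (sub_nonneg.2 h.2)]

lemma stairs_subset_unitSq (P : Finset (ℝ × ℝ)) : stairs P ⊆ unitSq := by
  intro z hz
  simp only [stairs, mem_iUnion, mem_ofPred_eq, exists_prop] at hz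
  obtain ⟨b, ⟨hb, -⟩, hzb⟩ := hz
  exact ⟨hzb.1, hzb.2.trans hb.2⟩

lemma bddAbove_rectArea_subset_stairs (P : Finset (ℝ × ℝ)) :
    BddAbove {a : ℝ | ∃ c d : ℝ × ℝ, c ≤ d ∧ Icc c d ⊆ stairs P ∧ a = rectArea c d} := by
  refine ⟨1, ?_⟩
  rintro _ ⟨c, d, -, hsub, rfl⟩
  calc rectArea c d ≤ volume.real unitSq :=
        measureReal_mono (hsub.trans (stairs_subset_unitSq P)) isCompact_Icc.measure_lt_top.ne
    _ = 1 := by rw [unitSq, volume_real_Icc_prod (by norm_num)]; norm_num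

lemma alphaOf_nonneg (P : Finset (ℝ × ℝ)) : 0 ≤ alphaOf P :=
  Real.sSup_nonneg (by rintro _ ⟨c, d, -, -, rfl⟩; exact measureReal_nonneg)

lemma mul_le_alphaOf_of_mem_stairs {P : Finset (ℝ × ℝ)} {z : ℝ × ℝ} (hz : z ∈ stairs P) :
    z.1 * z.2 ≤ alphaOf P := by
  simp only [stairs, mem_iUnion, mem_ofPred_eq, exists_prop] at hz
  obtain ⟨b, hb, hzb⟩ := hz
  have hbα : rectArea (0, 0) b ≤ alphaOf P :=
    le_csSup (bddAbove_rectArea_subset_stairs P)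
      ⟨(0, 0), b, hb.1.1, subset_biUnion_of_mem (u := fun b => Icc ((0, 0) : ℝ × ℝ) b) hb, rfl⟩
  rw [rectArea, ← measureReal_def, volume_real_Icc_prod hb.1.1] at hbα
  have h0 : ((0, 0) : ℝ × ℝ) ≤ z := hzb.1
  calc z.1 * z.2 ≤ b.1 * b.2 := mul_le_mul hzb.2.1 hzb.2.2 h0.2 (h0.1.trans hzb.2.1)
    _ = (b.1 - 0) * (b.2 - 0) := by ring
    _ ≤ alphaOf P := hbα

def underHyperbola (a : ℝ) : Set (ℝ × ℝ) := {z | z ∈ unitSq ∧ z.1 * z.2 ≤ a}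

lemma stairs_subset_underHyperbola (P : Finset (ℝ × ℝ)) :
    stairs P ⊆ underHyperbola (alphaOf P) :=
  fun _ hz => ⟨stairs_subset_unitSq P hz, mul_le_alphaOf_of_mem_stairs hz⟩

def hyperbolaStrip (a : ℝ) (j : ℕ) : Set (ℝ × ℝ) :=
  Icc ((2 / 3 : ℝ) ^ (j + 1), 0) ((2 / 3) ^ j, a / (2 / 3) ^ (j + 1))

lemma underHyperbola_subset_strips (a : ℝ) (n : ℕ) :
    underHyperbola a ⊆ Icc 0 ((2 / 3 : ℝ) ^ n, 1) ∪ ⋃ j ∈ Finset.range n, hyperbolaStrip a j := by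
  rintro z ⟨⟨⟨hx0, hy0⟩, hx1, hy1⟩, hza⟩
  rcases le_or_gt z.1 ((2 / 3 : ℝ) ^ n) with hx | hx
  · exact Or.inl ⟨⟨hx0, hy0⟩, hx, hy1⟩
  obtain ⟨j, hjx, hxj⟩ := exists_nat_pow_near_of_lt_one (hx.trans_le' (by positivity)) hx1
    (by norm_num : (0 : ℝ) < 2 / 3) (by norm_num)
  have hjn : j < n :=
    (pow_lt_pow_iff_right_of_lt_one₀ (by norm_num) (by norm_num)).1 (hx.trans_le hxj)
  refine Or.inr (mem_biUnion (Finset.mem_range.2 hjn) ⟨⟨hjx.le, hy0⟩, hxj, ?_⟩)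
  rw [le_div_iff₀ (by positivity)]
  nlinarith

lemma volume_real_hyperbolaStrip {a : ℝ} (ha : 0 ≤ a) (j : ℕ) :
    volume.real (hyperbolaStrip a j) = a / 2 := by
  rw [hyperbolaStrip, volume_real_Icc_prod ⟨pow_le_pow_of_le_one (by norm_num) (by norm_num) j.le_succ,
    by positivity⟩, pow_succ]
  field_simp
  ring

lemma volume_real_underHyperbola_le (a : ℝ) (ha : 0 ≤ a) (n : ℕ) :
    volume.real (underHyperbola a) ≤ n * (a / 2) + (2 / 3) ^ n := by
  have hbdd : Bornology.IsBounded
      (Icc 0 ((2 / 3 : ℝ) ^ n, (1 : ℝ)) ∪ ⋃ j ∈ Finset.range n, hyperbolaStrip a j) :=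
    (Metric.isBounded_Icc _ _).union
      ((Bornology.isBounded_biUnion_finset _).2 fun _ _ => Metric.isBounded_Icc _ _)
  calc volume.real (underHyperbola a)
      ≤ volume.real (Icc 0 ((2 / 3 : ℝ) ^ n, (1 : ℝ)) ∪ ⋃ j ∈ Finset.range n, hyperbolaStrip a j) :=
        measureReal_mono (underHyperbola_subset_strips a n) hbdd.measure_lt_top.ne
    _ ≤ volume.real (Icc 0 ((2 / 3 : ℝ) ^ n, (1 : ℝ))) +
          ∑ j ∈ Finset.range n, volume.real (hyperbolaStrip a j) :=
        (measureReal_union_le _ _).trans (by gcongr; exact measureReal_biUnion_finset_le _ _)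
    _ = n * (a / 2) + (2 / 3) ^ n := by
        rw [volume_real_Icc_prod ⟨by positivity, zero_le_one⟩]
        simp only [Prod.fst_zero, Prod.snd_zero, sub_zero, mul_one, volume_real_hyperbolaStrip ha,
          Finset.sum_const, Finset.card_range, nsmul_eq_mul]
        ring

lemma stairsArea_le (P : Finset (ℝ × ℝ)) (n : ℕ) :
    stairsArea P ≤ n * (alphaOf P / 2) + (2 / 3) ^ n :=
  (measureReal_mono (stairs_subset_underHyperbola P)
    (measure_ne_top_of_subset (fun _ hz => hz.1) isCompact_Icc.measure_lt_top.ne)).trans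
    (volume_real_underHyperbola_le _ (alphaOf_nonneg P) n)

lemma stairsArea_eq_rhoOf_mul {P : Finset (ℝ × ℝ)} (h : rhoOf P ≠ 0) :
    stairsArea P = rhoOf P * alphaOf P := by
  have hα : alphaOf P ≠ 0 := fun h0 => h (by rw [rhoOf, h0, div_zero])
  rw [rhoOf, div_mul_cancel₀ _ hα]

lemma alphaOf_le_of_one_le_rhoOf {P : Finset (ℝ × ℝ)} (h : 1 ≤ rhoOf P) :
    alphaOf P ≤ (2 / 3) ^ (2 * rhoOf P - 3) := by
  set n := ⌊2 * rhoOf P - 2⌋₊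
  have hs := stairsArea_eq_rhoOf_mul (P := P) (by linarith)
  have hn : (n : ℝ) ≤ 2 * rhoOf P - 2 := Nat.floor_le (by linarith)
  have hn' : 2 * rhoOf P - 3 < n := by linarith [Nat.lt_floor_add_one (2 * rhoOf P - 2)]
  have hαn : alphaOf P ≤ (2 / 3) ^ n := by
    linarith [stairsArea_le P n, mul_le_mul_of_nonneg_right hn (alphaOf_nonneg P)]
  calc alphaOf P ≤ (2 / 3 : ℝ) ^ (n : ℝ) := by rwa [Real.rpow_natCast]
    _ ≤ (2 / 3) ^ (2 * rhoOf P - 3) :=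
        Real.rpow_le_rpow_of_exponent_ge (by norm_num) (by norm_num) hn'.le

lemma tendsto_mul_rpow_atTop_nhds_zero {c : ℝ} (hc0 : 0 < c) (hc1 : c < 1) :
    Tendsto (fun x : ℝ => x * c ^ x) atTop (𝓝 0) := by
  refine (tendsto_rpow_mul_exp_neg_mul_atTop_nhds_zero 1 (-Real.log c)
    (neg_pos.2 (Real.log_neg hc0 hc1))).congr fun x => ?_
  rw [Real.rpow_one, neg_neg, Real.rpow_def_of_pos hc0, mul_comm (Real.log c)]

lemma mul_rpow_two_thirds_eq (ρ : ℝ) :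
    ρ * (2 / 3 : ℝ) ^ (2 * ρ - 3) = 1 / 4 * 2 ^ (-ρ) * (27 / 2 * (ρ * (8 / 9) ^ ρ)) := by
  have h49 : (2 / 3 : ℝ) ^ (2 * ρ) = (2 ^ ρ)⁻¹ * (8 / 9) ^ ρ := by
    rw [Real.rpow_mul (by norm_num), ← Real.inv_rpow (by norm_num), ← Real.mul_rpow (by norm_num)
      (by norm_num)]
    norm_num
  rw [Real.rpow_sub (by norm_num), h49, Real.rpow_neg (by norm_num),
    show (2 / 3 : ℝ) ^ (3 : ℝ) = 8 / 27 by norm_num]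
  ring

lemma eventually_mul_rpow_le : ∀ᶠ ρ : ℝ in atTop, ρ * (2 / 3) ^ (2 * ρ - 3) ≤ 1 / 4 * 2 ^ (-ρ) := by
  filter_upwards [(tendsto_order.1 (tendsto_mul_rpow_atTop_nhds_zero (c := 8 / 9) (by norm_num)
    (by norm_num))).2 (2 / 27) (by norm_num)] with ρ hρ
  rw [mul_rpow_two_thirds_eq]
  have : 0 < 1 / 4 * (2 : ℝ) ^ (-ρ) := by positivity
  nlinarith

/-- If `ρ = s/α ≥ r₀`, then the staircase has small area: `s ≤ (1/4)·2^(−ρ)`. -/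
theorem statement1 :
    ∃ r₀ : ℝ, ∀ P : Finset (ℝ × ℝ), IsConfig P → P ≠ {((0, 0) : ℝ × ℝ)} →
      r₀ ≤ rhoOf P →
      stairsArea P ≤ (1 / 4) * (2 : ℝ) ^ (-(rhoOf P)) := by
  obtain ⟨r, hr⟩ := eventually_atTop.1 eventually_mul_rpow_le
  refine ⟨max r 1, fun P _ _ hρ => ?_⟩
  have h1 : 1 ≤ rhoOf P := le_of_max_le_right hρ
  calc stairsArea P = rhoOf P * alphaOf P := stairsArea_eq_rhoOf_mul (by linarith)
    _ ≤ rhoOf P * (2 / 3) ^ (2 * rhoOf P - 3) :=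
        mul_le_mul_of_nonneg_left (alphaOf_le_of_one_le_rhoOf h1) (by linarith)
    _ ≤ 1 / 4 * 2 ^ (-rhoOf P) := hr _ (le_of_max_le_left hρ)
end
end

section
/- The function bob is monotone: bob(n+1) ≤ bob(n) for every natural number n ≥ 1. -/
open MeasureTheory Set
open scoped Classical

noncomputable section

lemma aux_interior_Icc (a b : ℝ × ℝ) :
    interior (Set.Icc a b) = Set.Ioo a.1 b.1 ×ˢ Set.Ioo a.2 b.2 := by
  rw [Set.Icc_prod_eq, interior_prod_eq, interior_Icc, interior_Icc]

lemma aux_volume_Icc (a b : ℝ × ℝ) :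
    volume (Set.Icc a b) = ENNReal.ofReal (b.1 - a.1) * ENNReal.ofReal (b.2 - a.2) := by
  rw [Set.Icc_prod_eq, Measure.volume_eq_prod, Measure.prod_prod, Real.volume_Icc, Real.volume_Icc]

lemma aux_rectArea_top (a b : ℝ × ℝ) (h : a.2 = b.2) : rectArea a b = 0 := by
  simp [rectArea, aux_volume_Icc, h]

lemma aux_rectArea_nonneg (a b : ℝ × ℝ) : 0 ≤ rectArea a b := ENNReal.toReal_nonneg

lemma aux_bobP_nonneg (P : Finset (ℝ × ℝ)) : 0 ≤ bobP P := by
  apply Real.sSup_nonneg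
  rintro x ⟨q, _, rfl⟩
  exact Finset.sum_nonneg fun p _ => aux_rectArea_nonneg _ _

lemma aux_exists_config (n : ℕ) (hn : 1 ≤ n) :
    ∃ P : Finset (ℝ × ℝ), IsConfig P ∧ P.card = n := by
  have hn' : (0:ℝ) < n := by exact_mod_cast hn
  refine ⟨(Finset.range n).image (fun i : ℕ => (((i : ℝ) / (n : ℝ), (0:ℝ)) : ℝ × ℝ)), ⟨?_, ?_⟩, ?_⟩
  · refine Finset.mem_image.mpr ⟨0, Finset.mem_range.mpr hn, by norm_num⟩
  · intro x hx
    simp only [Finset.coe_image, Set.mem_image, Finset.mem_coe, Finset.mem_range] at hx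
    obtain ⟨i, hi, rfl⟩ := hx
    constructor
    · exact ⟨div_nonneg (Nat.cast_nonneg i) hn'.le, le_refl 0⟩
    · constructor
      · exact div_le_one_of_le₀ (by exact_mod_cast hi.le) hn'.le
      · norm_num
  · rw [Finset.card_image_of_injOn, Finset.card_range]
    intro i _ j _ hij
    have : (i : ℝ) / n = (j : ℝ) / n := congrArg Prod.fst hij
    have : (i : ℝ) = j := by field_simp at this; exact_mod_cast this
    exact_mod_cast this

lemma aux_exists_free_top (P : Finset (ℝ × ℝ)) :
    ∃ t : ℝ, t ∈ Set.Icc (0:ℝ) 1 ∧ ((t, 1) : ℝ × ℝ) ∉ P := by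
  by_contra h
  push_neg at h
  have hsub : Set.Icc (0:ℝ) 1 ⊆ (fun t => ((t, 1) : ℝ × ℝ)) ⁻¹' ↑P :=
    fun t ht => h t ht
  have hfin : ((fun t => ((t, 1) : ℝ × ℝ)) ⁻¹' (↑P : Set (ℝ × ℝ))).Finite :=
    Set.Finite.preimage (fun x _ y _ hxy => (Prod.mk.injEq _ _ _ _ ▸ hxy : _ ∧ _).1)
      P.finite_toSet
  exact ((Set.Icc_infinite zero_lt_one).mono hsub) hfin

lemma aux_bobP_insert_top (P : Finset (ℝ × ℝ)) (t : ℝ) (ht : t ∈ Set.Icc (0:ℝ) 1)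
    (htP : ((t, 1) : ℝ × ℝ) ∉ P) :
    bobP (insert ((t, 1) : ℝ × ℝ) P) = bobP P := by
  have htsq : ((t, 1) : ℝ × ℝ) ∈ unitSq := ⟨⟨ht.1, zero_le_one⟩, ⟨ht.2, le_refl 1⟩⟩
  unfold bobP
  congr 1
  ext a
  constructor
  · rintro ⟨q, ⟨hle, hsub, hdisj⟩, rfl⟩
    refine ⟨q, ⟨fun p hp => hle p (Finset.mem_insert_of_mem hp),
      fun p hp => hsub p (Finset.mem_insert_of_mem hp),
      fun p hp p' hp' hne => hdisj p (Finset.mem_insert_of_mem hp) p'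
        (Finset.mem_insert_of_mem hp') hne⟩, ?_⟩
    have h1 : ((t, 1) : ℝ × ℝ) ≤ q (t, 1) := hle _ (Finset.mem_insert_self _ _)
    have h2 : q (t, 1) ∈ unitSq := hsub _ (Finset.mem_insert_self _ _)
      (Set.right_mem_Icc.mpr h1)
    have hy : (1 : ℝ) = (q (t, 1)).2 := le_antisymm h1.2 h2.2.2
    have h0 : rectArea ((t, 1) : ℝ × ℝ) (q (t, 1)) = 0 := aux_rectArea_top _ _ hy
    unfold famArea
    rw [Finset.sum_insert htP, h0, zero_add]
  · rintro ⟨q, ⟨hle, hsub, hdisj⟩, rfl⟩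
    refine ⟨Function.update q ((t, 1) : ℝ × ℝ) ((t, 1) : ℝ × ℝ), ⟨?_, ?_, ?_⟩, ?_⟩
    · intro p hp
      rcases Finset.mem_insert.mp hp with h | h
      · subst h; rw [Function.update_self]
      · rw [Function.update_of_ne (by rintro rfl; exact htP h)]
        exact hle p h
    · intro p hp
      rcases Finset.mem_insert.mp hp with h | h
      · subst h; rw [Function.update_self, Set.Icc_self, Set.singleton_subset_iff]
        exact htsq
      · rw [Function.update_of_ne (by rintro rfl; exact htP h)]
        exact hsub p h
    · intro p hp p' hp' hne
      have hnew : interior (Set.Icc ((t, 1) : ℝ × ℝ) ((t, 1) : ℝ × ℝ)) = ∅ := by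
        rw [aux_interior_Icc]; simp
      rcases Finset.mem_insert.mp hp with h | h
      · subst h
        rw [Function.update_self, hnew, Set.empty_inter]
      · rcases Finset.mem_insert.mp hp' with h' | h'
        · subst h'
          rw [Function.update_self, hnew, Set.inter_empty]
        · rw [Function.update_of_ne (by rintro rfl; exact htP h),
            Function.update_of_ne (by rintro rfl; exact htP h')]
          exact hdisj p h p' h' hne
    · unfold famArea
      rw [Finset.sum_insert htP, Function.update_self,
        aux_rectArea_top _ _ rfl, zero_add]
      exact Finset.sum_congr rfl fun p hp => by
        rw [Function.update_of_ne (by rintro rfl; exact htP hp)]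

/-- Monotonicity: `bob(n+1) ≤ bob(n)` for every `n ≥ 1`. -/
theorem statement7 : ∀ n : ℕ, 1 ≤ n → bobN (n + 1) ≤ bobN n := by
  intro n hn
  obtain ⟨P0, hP0, hcard0⟩ := aux_exists_config n hn
  have hSn : Set.Nonempty { a : ℝ | ∃ P : Finset (ℝ × ℝ),
      IsConfig P ∧ P.card = n ∧ a = bobP P } := ⟨bobP P0, P0, hP0, hcard0, rfl⟩
  apply le_csInf hSn
  rintro a ⟨P, hP, hcard, rfl⟩
  obtain ⟨t, ht, htP⟩ := aux_exists_free_top P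
  have h1 : IsConfig (insert ((t, 1) : ℝ × ℝ) P) :=
    ⟨Finset.mem_insert_of_mem hP.1, by
      rw [Finset.coe_insert]
      exact Set.insert_subset ⟨⟨ht.1, zero_le_one⟩, ⟨ht.2, le_refl 1⟩⟩ hP.2⟩
  have h2 : (insert ((t, 1) : ℝ × ℝ) P).card = n + 1 := by
    rw [Finset.card_insert_of_notMem htP, hcard]
  have h3 : bobP (insert ((t, 1) : ℝ × ℝ) P) = bobP P :=
    aux_bobP_insert_top P t ht htP
  have hmem : bobP (insert ((t, 1) : ℝ × ℝ) P) ∈ { a : ℝ | ∃ Q : Finset (ℝ × ℝ),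
      IsConfig Q ∧ Q.card = n + 1 ∧ a = bobP Q } := ⟨_, h1, h2, rfl⟩
  have hbdd : BddBelow { a : ℝ | ∃ Q : Finset (ℝ × ℝ),
      IsConfig Q ∧ Q.card = n + 1 ∧ a = bobP Q } := by
    refine ⟨0, ?_⟩
    rintro x ⟨Q, _, _, rfl⟩
    exact aux_bobP_nonneg Q
  calc bobN (n + 1) ≤ bobP (insert ((t, 1) : ℝ × ℝ) P) := csInf_le hbdd hmem
    _ = bobP P := h3
end
end

section
/- Let β₁, …, β_k be nonnegative reals with sum S, and let B ≥ 0 satisfy S ≥ 3B and Σ_{j≠i} βⱼ ≥ B for every index i. Then the index set {1, …, k} can be partitioned into two disjoint subsets I₁ and I₂ such that Σ_{i∈I₁} βᵢ ≥ B and Σ_{i∈I₂} βᵢ ≥ B. -/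
/-- If `β₁, …, β_k ≥ 0` sum to `S`, with `S ≥ 3B` and `Σ_{j≠i} βⱼ ≥ B` for every
`i`, then the index set can be partitioned into `I₁, I₂` with
`Σ_{i∈I₁} βᵢ ≥ B` and `Σ_{i∈I₂} βᵢ ≥ B`. -/
theorem statement12 (k : ℕ) (β : Fin k → ℝ) (B S : ℝ)
    (hβ : ∀ i : Fin k, 0 ≤ β i) (hS : S = ∑ i : Fin k, β i) (hB : 0 ≤ B)
    (hS3 : 3 * B ≤ S)
    (hmost : ∀ i : Fin k, B ≤ ∑ j ∈ Finset.univ \ {i}, β j) :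
    ∃ I₁ I₂ : Finset (Fin k), Disjoint I₁ I₂ ∧ I₁ ∪ I₂ = Finset.univ ∧
      B ≤ ∑ i ∈ I₁, β i ∧ B ≤ ∑ i ∈ I₂, β i := by
  classical
  rcases eq_or_lt_of_le hB with hB0 | hBpos
  · refine ⟨Finset.univ, ∅, Finset.disjoint_empty_right _, by simp, ?_, by simp [← hB0]⟩
    rw [← hB0]; exact Finset.sum_nonneg fun i _ => hβ i
  by_cases hex : ∃ i, B ≤ β i
  · obtain ⟨i, hi⟩ := hex
    refine ⟨{i}, Finset.univ \ {i}, Finset.disjoint_sdiff, ?_, by simpa, hmost i⟩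
    rw [Finset.union_sdiff_of_subset (Finset.subset_univ _)]
  push_neg at hex
  set f : ℕ → ℝ := fun m => ∑ i ∈ Finset.univ.filter (fun i : Fin k => (i : ℕ) < m), β i
    with hf
  have hPk : B ≤ f k := by
    have h1 : Finset.univ.filter (fun i : Fin k => (i : ℕ) < k) = Finset.univ :=
      Finset.filter_true_of_mem fun i _ => i.isLt
    rw [hf]; simp only [h1]; rw [← hS]; linarith
  have hE : ∃ m, B ≤ f m := ⟨k, hPk⟩
  set m := Nat.find hE with hmdef
  have hm : B ≤ f m := Nat.find_spec hE
  have hmin : ∀ n < m, ¬ B ≤ f n := fun n hn => Nat.find_min hE hn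
  have hmk : m ≤ k := Nat.find_min' hE hPk
  have hm0 : 0 < m := by
    rcases Nat.eq_zero_or_pos m with h | h
    · exfalso
      have : f 0 = 0 := by simp [hf]
      rw [h] at hm; rw [this] at hm; linarith
    · exact h
  have hlt : m - 1 < k := by omega
  have hsplit : Finset.univ.filter (fun i : Fin k => (i : ℕ) < m) =
      insert ⟨m - 1, hlt⟩ (Finset.univ.filter (fun i : Fin k => (i : ℕ) < m - 1)) := by
    ext i
    simp only [Finset.mem_filter, Finset.mem_insert, Finset.mem_univ, true_and,
      Fin.ext_iff]
    omega
  have hnotmem : (⟨m - 1, hlt⟩ : Fin k) ∉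
      Finset.univ.filter (fun i : Fin k => (i : ℕ) < m - 1) := by
    simp
  have hfm : f m = β ⟨m - 1, hlt⟩ + f (m - 1) := by
    rw [hf]; simp only; rw [hsplit, Finset.sum_insert hnotmem]
  have hprev : f (m - 1) < B := by
    by_contra h
    exact hmin (m - 1) (by omega) (by linarith)
  have hupper : f m < 2 * B := by
    have := hex ⟨m - 1, hlt⟩
    rw [hfm]; linarith
  refine ⟨Finset.univ.filter (fun i : Fin k => (i : ℕ) < m),
    Finset.univ.filter (fun i : Fin k => ¬ (i : ℕ) < m),
    Finset.disjoint_filter_filter_not _ _ _, Finset.filter_union_filter_not_eq _ _, hm, ?_⟩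
  have hsum : f m + ∑ i ∈ Finset.univ.filter (fun i : Fin k => ¬ (i : ℕ) < m), β i = S := by
    rw [hf]; simp only
    rw [Finset.sum_filter_add_sum_filter_not, hS]
  linarith
end

section
/- Let r ≥ 2 be a real number and let f : ℝ → ℝ be nondecreasing with f(x) ≥ 1 for all x ≥ r − 1. Suppose that f(x) ≥ 2·f(x − 2^(−(x+1)/2)) for every x with r − 1 < x ≤ r. Then f(r) ≥ 2^⌊2^(r/2)⌋. -/
/-- If `f` is nondecreasing, `f(x) ≥ 1` for `x ≥ r − 1`, and
`f(x) ≥ 2·f(x − 2^(−(x+1)/2))` for all `r − 1 < x ≤ r`, then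
`f(r) ≥ 2^⌊2^(r/2)⌋`. -/
theorem statement14 (r : ℝ) (hr : 2 ≤ r) (f : ℝ → ℝ) (hf : Monotone f)
    (h1 : ∀ x : ℝ, r - 1 ≤ x → 1 ≤ f x)
    (hrec : ∀ x : ℝ, r - 1 < x → x ≤ r →
      2 * f (x - (2 : ℝ) ^ (-(x + 1) / 2)) ≤ f x) :
    (2 : ℝ) ^ (⌊(2 : ℝ) ^ (r / 2)⌋ : ℤ) ≤ f r := by
  set A : ℝ := (2:ℝ) ^ (r/2) with hA
  have hApos : 0 < A := Real.rpow_pos_of_pos (by norm_num) _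
  have hA2 : (2:ℝ) ≤ A := by
    calc (2:ℝ) = (2:ℝ) ^ (1:ℝ) := (Real.rpow_one 2).symm
    _ ≤ A := Real.rpow_le_rpow_of_exponent_le (by norm_num) (by linarith)
  have hN0 : (0:ℤ) ≤ ⌊A⌋ := Int.le_floor.mpr (by push_cast; linarith)
  set N : ℕ := (⌊A⌋).toNat with hNdef
  have hNcast : ((N:ℤ)) = ⌊A⌋ := Int.toNat_of_nonneg hN0
  have hNA : (N:ℝ) ≤ A := by
    have h := Int.floor_le A
    rw [← hNcast] at h
    exact_mod_cast h
  have hAinv : 0 < A⁻¹ := inv_pos.mpr hApos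
  have hAA : A * A⁻¹ = 1 := mul_inv_cancel₀ (ne_of_gt hApos)
  let g : ℕ → ℝ := fun n => Nat.rec r (fun _ y => y - (2:ℝ) ^ (-(y + 1) / 2)) n
  have hg0 : g 0 = r := rfl
  have hgs : ∀ k, g (k+1) = g k - (2:ℝ) ^ (-(g k + 1) / 2) := fun k => rfl
  have hstep : ∀ y : ℝ, r - 1 ≤ y → (2:ℝ) ^ (-(y+1)/2) ≤ A⁻¹ := by
    intro y hy
    rw [hA, ← Real.rpow_neg (by norm_num)]
    exact Real.rpow_le_rpow_of_exponent_le (by norm_num) (by linarith)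
  have hsteppos : ∀ y : ℝ, (0:ℝ) < (2:ℝ) ^ (-(y+1)/2) := fun y =>
    Real.rpow_pos_of_pos (by norm_num) _
  have main : ∀ k, k ≤ N →
      (r - (k:ℝ) * A⁻¹ ≤ g k ∧ g k ≤ r) ∧ (2:ℝ)^k * f (g k) ≤ f r := by
    intro k
    induction k with
    | zero => intro _; refine ⟨⟨by simp [hg0], le_of_eq hg0⟩, by simp [hg0]⟩
    | succ k ih =>
      intro hk
      obtain ⟨⟨hlo, hhi⟩, hfk⟩ := ih (Nat.le_of_succ_le hk)
      have hkA : (k:ℝ) + 1 ≤ A := by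
        have : ((k:ℝ) + 1) ≤ (N:ℝ) := by exact_mod_cast hk
        linarith
      have hkA1 : (k:ℝ) * A⁻¹ < 1 := by
        have h1' : (k:ℝ) * A⁻¹ ≤ (A - 1) * A⁻¹ :=
          mul_le_mul_of_nonneg_right (by linarith) (le_of_lt hAinv)
        nlinarith
      have hgk1 : r - 1 < g k := by linarith
      have hrecK := hrec (g k) hgk1 hhi
      rw [← hgs k] at hrecK
      have hstepK : (2:ℝ) ^ (-(g k + 1)/2) ≤ A⁻¹ := hstep (g k) (le_of_lt hgk1)
      constructor
      · constructor
        · rw [hgs k]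
          push_cast
          nlinarith
        · rw [hgs k]
          have := hsteppos (g k)
          linarith
      · have hp : (0:ℝ) < (2:ℝ)^k := by positivity
        calc (2:ℝ)^(k+1) * f (g (k+1)) = (2:ℝ)^k * (2 * f (g (k+1))) := by ring
        _ ≤ (2:ℝ)^k * f (g k) := by nlinarith
        _ ≤ f r := hfk
  obtain ⟨⟨hlo, _⟩, hfr⟩ := main N le_rfl
  have hgN : r - 1 ≤ g N := by
    have h1' : (N:ℝ) * A⁻¹ ≤ 1 := by
      have h := mul_le_mul_of_nonneg_right hNA (le_of_lt hAinv)
      rw [hAA] at h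
      exact h
    linarith
  have hfgN := h1 (g N) hgN
  have h2N : (2:ℝ)^N ≤ f r := by nlinarith [pow_pos (show (0:ℝ)<2 by norm_num) N]
  rw [← hNcast, zpow_natCast]
  exact h2N
end
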